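/- arXiv:math/0402044 — 6 statements merged into one kernel-verified Lean document; each statement's English description precedes it below -/
import Mathlib

section
/- Let χ be an r-fold vector cross product on a real inner product space V with associated form φ, and define τ(v₁,...,v_{r+1}) = (1/√(r+1)) Σ_{k=1}^{r+1} (-1)^{k-1} v_k ∧ χ(v₁,...,v̂_k,...,v_{r+1}) ∈ Λ²V. Then for pairwise orthogonal vectors v₁,...,v_{r+1}, |φ(v₁,...,v_{r+1})|² + |τ(v₁,...,v_{r+1})|² = |v₁ ∧ ... ∧ v_{r+1}|². -/
open scoped RealInnerProductSpace

/-!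
For pairwise orthogonal `v`, the Gram matrix of `v` and of every subfamily is diagonal, so in the
double sum only the terms `k = l` survive: the others contain `⟪v k, v l⟫` and
`⟪v k, χ(v₁,…,v̂_l,…)⟫`, which vanish because `v k` is one of the arguments of `χ`. The diagonal
term is `|v₁|² ⋯ |v_{r+1}|² - ⟪χ(v₁,…,v̂_k,…), v_k⟫²`, and `⟪χ(v₁,…,v̂_k,…), v_k⟫ = ±φ(v)`
because `φ` is alternating. Summing the `r + 1` equal diagonal terms gives the claim.
-/

lemma Fin.succ_succAbove_of_ne {n : ℕ} {k j : Fin n} (h : j ≠ k) :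
    k.succ.succAbove j = k.castSucc.succAbove j := by
  rcases h.lt_or_gt with h | h
  · rw [succAbove_succ_of_le _ _ h.le, succAbove_castSucc_of_lt _ _ h]
  · rw [succAbove_succ_of_lt _ _ h, succAbove_castSucc_of_le _ _ h.le]

lemma Matrix.det_gram_of_pairwise_inner_eq_zero {V ι : Type*} [NormedAddCommGroup V]
    [InnerProductSpace ℝ V] [Fintype ι] [DecidableEq ι] (w : ι → V)
    (hw : Pairwise fun i j => ⟪w i, w j⟫ = 0) :
    (gram ℝ w).det = ∏ i, ⟪w i, w i⟫ := by
  rw [← det_diagonal]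
  congr 1
  ext i j
  rcases eq_or_ne i j with rfl | hij
  · simp [gram_apply]
  · simp [gram_apply, hij, hw hij]

namespace AlternatingMap

variable {V : Type*} [NormedAddCommGroup V] [InnerProductSpace ℝ V]

section Perp

variable {ι : Type*} [DecidableEq ι] (χ : AlternatingMap ℝ V V ι)
  (hperp : ∀ (v : ι → V) (i : ι), ⟪χ v, v i⟫ = 0)
include hperp

/-- The polarization of `⟪χ v, v i⟫ = 0` in the `i`-th argument. -/
lemma inner_update_eq_neg (w : ι → V) (i : ι) (a b : V) :
    ⟪χ (Function.update w i a), b⟫ = -⟪χ (Function.update w i b), a⟫ := by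
  have hab := hperp (Function.update w i (a + b)) i
  have ha := hperp (Function.update w i a) i
  have hb := hperp (Function.update w i b) i
  simp only [Function.update_self, χ.map_update_add, inner_add_left, inner_add_right] at hab ha hb
  linarith

end Perp

section CrossProduct

variable {r : ℕ} (χ : AlternatingMap ℝ V V (Fin r))
  (hperp : ∀ (v : Fin r → V) (i : Fin r), ⟪χ v, v i⟫ = 0)
include hperp

lemma inner_succAbove_of_ne (v : Fin (r + 1) → V) {k l : Fin (r + 1)} (hkl : k ≠ l) :
    ⟪χ (fun i => v (k.succAbove i)), v l⟫ = 0 := by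
  obtain ⟨j, rfl⟩ := Fin.exists_succAbove_eq hkl.symm
  exact hperp _ j

lemma inner_succ_succAbove (v : Fin (r + 1) → V) (k : Fin r) :
    ⟪χ (fun i => v (k.succ.succAbove i)), v k.succ⟫
      = -⟪χ (fun i => v (k.castSucc.succAbove i)), v k.castSucc⟫ := by
  have hsucc : (fun i => v (k.succ.succAbove i))
      = Function.update (fun i => v (k.castSucc.succAbove i)) k (v k.castSucc) := by
    funext j
    rcases eq_or_ne j k with rfl | hj
    · simp
    · rw [Function.update_of_ne hj, Fin.succ_succAbove_of_ne hj]
  have hcastSucc : Function.update (fun i => v (k.castSucc.succAbove i)) k (v k.succ)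
      = fun i => v (k.castSucc.succAbove i) := by
    simp
  rw [hsucc, inner_update_eq_neg χ hperp, hcastSucc]

lemma sq_inner_succAbove_eq (v : Fin (r + 1) → V) (k l : Fin (r + 1)) :
    ⟪χ (fun i => v (k.succAbove i)), v k⟫ ^ 2 = ⟪χ (fun i => v (l.succAbove i)), v l⟫ ^ 2 := by
  suffices h : ∀ k : Fin (r + 1), ⟪χ (fun i => v (k.succAbove i)), v k⟫ ^ 2
      = ⟪χ (fun i => v ((0 : Fin (r + 1)).succAbove i)), v 0⟫ ^ 2 by
    rw [h k, h l]
  intro k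
  induction k using Fin.induction with
  | zero => rfl
  | succ k ih => rw [inner_succ_succAbove χ hperp, neg_sq, ih]

/-- The `k`-th row of the double sum `|τ(v)|²` for an orthogonal family `v`. -/
lemma sum_inner_wedge_of_pairwise_inner_eq_zero
    (hnorm : ∀ v : Fin r → V, ⟪χ v, χ v⟫ = Matrix.det (Matrix.of fun i j => ⟪v i, v j⟫))
    (v : Fin (r + 1) → V) (horth : Pairwise fun i j => ⟪v i, v j⟫ = 0) (k : Fin (r + 1)) :
    ∑ l : Fin (r + 1), (-1 : ℝ) ^ ((k : ℕ) + (l : ℕ)) *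
        (⟪v k, v l⟫ * ⟪χ (fun i => v (k.succAbove i)), χ (fun i => v (l.succAbove i))⟫
          - ⟪v k, χ (fun i => v (l.succAbove i))⟫ * ⟪χ (fun i => v (k.succAbove i)), v l⟫)
      = ∏ i, ⟪v i, v i⟫ - ⟪χ (fun i => v (k.succAbove i)), v k⟫ ^ 2 := by
  rw [Finset.sum_eq_single_of_mem k (Finset.mem_univ k)]
  · have hnorm_k : ⟪χ (fun i => v (k.succAbove i)), χ (fun i => v (k.succAbove i))⟫
        = ∏ i, ⟪v (k.succAbove i), v (k.succAbove i)⟫ :=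
      (hnorm _).trans <| Matrix.det_gram_of_pairwise_inner_eq_zero _
        fun i j hij => horth (Fin.succAbove_right_injective.ne hij)
    rw [Fin.prod_univ_succAbove _ k, hnorm_k, ← two_mul, pow_mul, neg_one_sq, one_pow,
      real_inner_comm (χ _) (v k)]
    ring
  · intro l _ hlk
    rw [horth hlk.symm, real_inner_comm _ (v k), inner_succAbove_of_ne χ hperp v hlk,
      inner_succAbove_of_ne χ hperp v hlk.symm]
    ring

end CrossProduct

end AlternatingMap

/-- For an `r`-fold vector cross product `χ` with associated form `φ`, and
`τ(v₁,...,v_{r+1}) = (1/√(r+1)) Σ_k (-1)^{k-1} v_k ∧ χ(v₁,...,v̂_k,...,v_{r+1}) ∈ Λ²V`,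
one has, for pairwise orthogonal `v₁,...,v_{r+1}`:
`|φ(v)|² + |τ(v)|²_{Λ²} = |v₁ ∧ ... ∧ v_{r+1}|²`.
Here `|τ|²` is written out via the induced inner product on `Λ²V`,
`⟨a∧b, c∧d⟩ = ⟨a,c⟩⟨b,d⟩ - ⟨a,d⟩⟨b,c⟩`, and `|v₁∧...∧v_{r+1}|²` is the Gram
determinant. -/
theorem vcp_phi_tau_pythagoras
    {V : Type*} [NormedAddCommGroup V] [InnerProductSpace ℝ V] (r : ℕ)
    (χ : AlternatingMap ℝ V V (Fin r))
    (hperp : ∀ (v : Fin r → V) (i : Fin r), ⟪χ v, v i⟫ = 0)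
    (hnorm : ∀ v : Fin r → V,
      ⟪χ v, χ v⟫ = Matrix.det (Matrix.of fun i j => ⟪v i, v j⟫))
    (v : Fin (r+1) → V)
    (horth : ∀ i j : Fin (r+1), i ≠ j → ⟪v i, v j⟫ = 0) :
    ⟪χ (fun k => v k.castSucc), v (Fin.last r)⟫ ^ 2
      + ((r : ℝ) + 1)⁻¹ *
        ∑ k : Fin (r+1), ∑ l : Fin (r+1),
          (-1 : ℝ) ^ ((k : ℕ) + (l : ℕ)) *
            (⟪v k, v l⟫ * ⟪χ (fun i => v (k.succAbove i)), χ (fun i => v (l.succAbove i))⟫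
              - ⟪v k, χ (fun i => v (l.succAbove i))⟫ * ⟪χ (fun i => v (k.succAbove i)), v l⟫)
      = Matrix.det (Matrix.of fun i j => ⟪v i, v j⟫) := by
  have hphi : ∀ k : Fin (r + 1), ⟪χ (fun i => v (k.succAbove i)), v k⟫ ^ 2
      = ⟪χ (fun k => v k.castSucc), v (Fin.last r)⟫ ^ 2 := fun k => by
    simpa only [Fin.succAbove_last] using χ.sq_inner_succAbove_eq hperp v k (Fin.last r)
  have hdet : Matrix.det (Matrix.of fun i j => ⟪v i, v j⟫) = ∏ i, ⟪v i, v i⟫ :=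
    Matrix.det_gram_of_pairwise_inner_eq_zero v horth
  simp only [χ.sum_inner_wedge_of_pairwise_inner_eq_zero hperp hnorm v horth, hphi, hdet,
    Finset.sum_const, Finset.card_univ, Fintype.card_fin, nsmul_eq_mul, Nat.cast_add, Nat.cast_one]
  field_simp
  ring
end

section
/- Let χ be an r-fold vector cross product on a real inner product space V. An (r+1)-dimensional subspace P ⊆ V is preserved by χ (i.e., χ(p₁,...,p_r) ∈ P for all p_i ∈ P) if and only if τ(v₁,...,v_{r+1}) = 0 for any basis v₁,...,v_{r+1} of P, where τ(v₁,...,v_{r+1}) = (1/√(r+1)) Σ_k (-1)^{k-1} v_k ∧ χ(v₁,...,v̂_k,...,v_{r+1}). -/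
open scoped RealInnerProductSpace

/-!
Orthogonality `⟪χ v, v i⟫ = 0` makes `(v₀, …, v_r) ↦ ⟪χ(v₀, …, v_{r-1}), v_r⟫` alternating, so
`z_k := (-1)^k χ(v₀, …, v̂_k, …, v_r)` satisfies `⟪z_k, v_m⟫ = φ δ_km` for a single scalar `φ`.

If `χ` preserves `P = span v`, write `z_k = ∑ⱼ c_kj v_j`. The Gram matrix `⟪z_i, z_j⟫ = c_ji φ`
is symmetric, hence so is `c` (or all `z_k = 0` when `φ = 0`), and `τ ∝ ∑ c_kj v_k ∧ v_j = 0`.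

Conversely take `v = e` orthonormal. Then `n_k := z_k - ⟪e_k, z_k⟫ e_k` is orthogonal to `P`,
and pairing `τ` with `e_k ∧ n_k` gives `(-1)^k |n_k|²`, so `τ = 0` puts every
`χ(e₀, …, ê_k, …, e_r)` in `P`. Multilinearity then puts all of `χ(P, …, P)` in `P`, since an
injective `Fin r → Fin (r + 1)` is some `k.succAbove` up to a permutation.
-/

theorem Fin.exists_succAbove_comp_perm_of_injective {n : ℕ} {d : Fin n → Fin (n + 1)}
    (hd : Function.Injective d) :
    ∃ (k : Fin (n + 1)) (σ : Equiv.Perm (Fin n)), d = k.succAbove ∘ σ := by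
  obtain ⟨k, hk⟩ : ∃ k, k ∉ Set.range d := by
    by_contra! h
    simpa using Fintype.card_le_of_surjective d fun k => h k
  choose σ hσ using fun q => Fin.exists_succAbove_eq fun h : d q = k => hk ⟨q, h⟩
  have hσ_inj : Function.Injective σ := fun a b hab => hd <| by rw [← hσ a, ← hσ b, hab]
  exact ⟨k, Equiv.ofBijective σ (Finite.injective_iff_bijective.mp hσ_inj),
    funext fun q => (hσ q).symm⟩

namespace AlternatingMap

variable {R M N : Type*} [CommRing R] [AddCommGroup M] [Module R M] [AddCommGroup N] [Module R N]
  {n : ℕ} (f : M [⋀^Fin n]→ₗ[R] N) {e : Fin (n + 1) → M} {Q : Submodule R N}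

theorem map_comp_mem_of_forall_succAbove_mem
    (he : ∀ k : Fin (n + 1), f (fun i => e (k.succAbove i)) ∈ Q) (d : Fin n → Fin (n + 1)) :
    f (e ∘ d) ∈ Q := by
  by_cases hd : Function.Injective d
  · obtain ⟨k, σ, rfl⟩ := Fin.exists_succAbove_comp_perm_of_injective hd
    rw [← Function.comp_assoc, f.map_perm]
    exact Q.smul_of_tower_mem _ (he k)
  · rw [f.map_eq_zero_of_not_injective _ fun h => hd h.of_comp]
    exact Q.zero_mem

theorem map_mem_of_forall_succAbove_mem
    (he : ∀ k : Fin (n + 1), f (fun i => e (k.succAbove i)) ∈ Q) {p : Fin n → M}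
    (hp : ∀ i, p i ∈ Submodule.span R (Set.range e)) : f p ∈ Q := by
  choose c hc using fun i => (Submodule.mem_span_range_iff_exists_fun R).mp (hp i)
  have hexp : f p = ∑ d : Fin n → Fin (n + 1), (∏ i, c i (d i)) • f (e ∘ d) := by
    conv_lhs => rw [← funext hc]
    rw [← f.coe_multilinearMap, MultilinearMap.map_sum]
    simp_rw [MultilinearMap.map_smul_univ]
    rfl
  rw [hexp]
  exact Q.sum_mem fun d _ => Q.smul_mem _ (f.map_comp_mem_of_forall_succAbove_mem he d)

end AlternatingMap

namespace ExteriorAlgebra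

variable {R M : Type*} [CommRing R] [AddCommGroup M] [Module R M]

theorem sum_sum_smul_ι_mul_ι_eq_zero {κ : Type*} [Fintype κ] {c : κ → κ → R}
    (hc : ∀ i j, c i j = c j i) (v : κ → M) :
    ∑ i, ∑ j, c i j • (ι R (v i) * ι R (v j)) = 0 := by
  rw [← Fintype.sum_prod_type']
  refine Finset.sum_involution (fun x _ => x.swap) (fun x _ => ?_) (fun x _ hx hswap => hx ?_)
    (fun _ _ => Finset.mem_univ _) (fun _ _ => rfl)
  · rw [Prod.fst_swap, Prod.snd_swap, hc x.2 x.1, ← smul_add, ι_add_mul_swap, smul_zero]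
  · rw [show x.2 = x.1 from congrArg Prod.fst hswap, ι_sq_zero, smul_zero]

noncomputable def pairingWedge (f g : Module.Dual R M) : ExteriorAlgebra R M →ₗ[R] R :=
  liftAlternating (Pi.single 2 (Matrix.detRowAlternating.compLinearMap (LinearMap.pi ![f, g])))

theorem pairingWedge_ι_mul_ι (f g : Module.Dual R M) (x y : M) :
    pairingWedge f g (ι R x * ι R y) = f x * g y - g x * f y := by
  rw [pairingWedge, liftAlternating_ι_mul, liftAlternating_ι]
  exact (Matrix.det_fin_two _).trans (by simp)

variable {V : Type*} [NormedAddCommGroup V] [InnerProductSpace ℝ V]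

theorem sum_ι_mul_ι_eq_zero_of_inner_eq_ite {κ : Type*} [Fintype κ] [DecidableEq κ]
    {v z : κ → V} {φ : ℝ} (hz : ∀ k, z k ∈ Submodule.span ℝ (Set.range v))
    (hzv : ∀ k m, ⟪z k, v m⟫ = if m = k then φ else 0) :
    ∑ k, ι ℝ (v k) * ι ℝ (z k) = 0 := by
  choose c hc using fun k => (Submodule.mem_span_range_iff_exists_fun ℝ).mp (hz k)
  have hgram : ∀ i j, ⟪z i, z j⟫ = c j i * φ := by
    intro i j
    simp [← hc j, inner_sum, real_inner_smul_right, hzv]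
  by_cases hφ : φ = 0
  · have hz0 : ∀ k, z k = 0 := fun k => inner_self_eq_zero.mp (by rw [hgram, hφ, mul_zero])
    simp [hz0]
  · have hsymm : ∀ i j, c i j = c j i := fun i j =>
      mul_right_cancel₀ hφ (by rw [← hgram, ← hgram, real_inner_comm])
    calc ∑ k, ι ℝ (v k) * ι ℝ (z k) = ∑ k, ∑ j, c k j • (ι ℝ (v k) * ι ℝ (v j)) := by
          simp_rw [← hc, map_sum, Finset.mul_sum, map_smul, mul_smul_comm]
      _ = 0 := sum_sum_smul_ι_mul_ι_eq_zero hsymm v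

theorem eq_inner_smul_of_sum_ι_mul_ι_eq_zero {κ : Type*} [Fintype κ] {e w : κ → V}
    (he : Orthonormal ℝ e) (hw : ∀ k m, m ≠ k → ⟪w k, e m⟫ = 0)
    (hsum : ∑ k, ι ℝ (e k) * ι ℝ (w k) = 0) (k : κ) : w k = ⟪e k, w k⟫ • e k := by
  classical
  set n := w k - ⟪e k, w k⟫ • e k with hn
  have hne : ∀ m, ⟪n, e m⟫ = 0 := by
    intro m
    rw [hn, inner_sub_left, real_inner_smul_left, orthonormal_iff_ite.mp he]
    by_cases h : m = k
    · rw [h, if_pos rfl, mul_one, real_inner_comm, sub_self]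
    · rw [hw k m h, if_neg (Ne.symm h), mul_zero, sub_zero]
  have hnn_eq : ⟪n, n⟫ = ⟪n, w k⟫ := by
    nth_rewrite 2 [hn]
    rw [inner_sub_right, real_inner_smul_right, hne, mul_zero, sub_zero]
  have hterm : ∀ m, pairingWedge (innerₗ V (e k)) (innerₗ V n) (ι ℝ (e m) * ι ℝ (w m))
      = if k = m then ⟪n, n⟫ else 0 := by
    intro m
    rw [pairingWedge_ι_mul_ι]
    simp only [innerₗ_apply_apply, orthonormal_iff_ite.mp he, hne, zero_mul, sub_zero]
    split_ifs with h
    · rw [← h, one_mul, hnn_eq]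
    · rw [zero_mul]
  have hnn : ⟪n, n⟫ = 0 := by
    simpa [hterm] using congrArg (pairingWedge (innerₗ V (e k)) (innerₗ V n)) hsum
  exact sub_eq_zero.mp (inner_self_eq_zero.mp hnn)

end ExteriorAlgebra

theorem Submodule.exists_orthonormal_span_eq {V : Type*} [NormedAddCommGroup V]
    [InnerProductSpace ℝ V] (P : Submodule ℝ V) [FiniteDimensional ℝ P] {n : ℕ}
    (h : Module.finrank ℝ P = n) :
    ∃ e : Fin n → V, Orthonormal ℝ e ∧ Submodule.span ℝ (Set.range e) = P := by
  let b := (stdOrthonormalBasis ℝ P).reindex (finCongr h)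
  refine ⟨P.subtype ∘ b, b.orthonormal.comp_linearIsometry P.subtypeₗᵢ, ?_⟩
  rw [Set.range_comp, Submodule.span_image, ← b.coe_toBasis, b.toBasis.span_eq,
    Submodule.map_subtype_top]

open ExteriorAlgebra

section CrossProduct

variable {V : Type*} [NormedAddCommGroup V] [InnerProductSpace ℝ V] {r : ℕ}
  {χ : AlternatingMap ℝ V V (Fin r)}

theorem inner_cross_update_anticomm (hperp : ∀ (v : Fin r → V) (i : Fin r), ⟪χ v, v i⟫ = 0)
    (u : Fin r → V) (p : Fin r) (x y : V) :
    ⟪χ (Function.update u p x), y⟫ = -⟪χ (Function.update u p y), x⟫ := by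
  have hxy := hperp (Function.update u p (x + y)) p
  have hx := hperp (Function.update u p x) p
  have hy := hperp (Function.update u p y) p
  simp only [Function.update_self, χ.map_update_add, inner_add_left, inner_add_right] at hxy hx hy
  linarith

theorem inner_cross_succAbove_of_ne (hperp : ∀ (v : Fin r → V) (i : Fin r), ⟪χ v, v i⟫ = 0)
    (v : Fin (r + 1) → V) {k m : Fin (r + 1)} (hmk : m ≠ k) :
    ⟪χ (fun i => v (k.succAbove i)), v m⟫ = 0 := by
  obtain ⟨q, rfl⟩ := Fin.exists_succAbove_eq hmk
  exact hperp _ q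

theorem inner_cross_succAbove_castSucc
    (hperp : ∀ (v : Fin r → V) (i : Fin r), ⟪χ v, v i⟫ = 0)
    (v : Fin (r + 1) → V) (k : Fin r) :
    ⟪χ (fun i => v (k.castSucc.succAbove i)), v k.castSucc⟫
      = -⟪χ (fun i => v (k.succ.succAbove i)), v k.succ⟫ := by
  set u : Fin r → V := fun i => v (k.castSucc.succAbove i)
  have hu : Function.update u k (v k.succ) = u := by
    rw [Function.update_eq_self_iff]; simp [u]
  have hu' : Function.update u k (v k.castSucc) = fun i => v (k.succ.succAbove i) := by
    funext q
    rcases eq_or_ne q k with rfl | hq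
    · simp
    · rw [Function.update_of_ne hq]
      rcases hq.lt_or_gt with h | h
      · simp [u, Fin.succAbove_castSucc_of_lt _ _ h, Fin.succAbove_succ_of_le _ _ h.le]
      · simp [u, Fin.succAbove_castSucc_of_le _ _ h.le, Fin.succAbove_succ_of_lt _ _ h]
  have := inner_cross_update_anticomm hperp u k (v k.succ) (v k.castSucc)
  rwa [hu, hu'] at this

theorem neg_one_pow_mul_inner_cross_succAbove
    (hperp : ∀ (v : Fin r → V) (i : Fin r), ⟪χ v, v i⟫ = 0) (v : Fin (r + 1) → V)
    (k : Fin (r + 1)) :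
    (-1) ^ (k : ℕ) * ⟪χ (fun i => v (k.succAbove i)), v k⟫
      = ⟪χ (fun i => v (Fin.succAbove 0 i)), v 0⟫ := by
  induction k using Fin.induction with
  | zero => simp
  | succ k ih =>
    rw [← ih, Fin.val_castSucc, Fin.val_succ, pow_succ, inner_cross_succAbove_castSucc hperp]
    ring

theorem sum_ι_mul_ι_cross_succAbove_eq_zero
    (hperp : ∀ (v : Fin r → V) (i : Fin r), ⟪χ v, v i⟫ = 0) (v : Fin (r + 1) → V)
    (hχ : ∀ p : Fin r → V, (∀ i, p i ∈ Submodule.span ℝ (Set.range v)) →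
      χ p ∈ Submodule.span ℝ (Set.range v)) :
    ∑ k : Fin (r + 1), ((-1 : ℝ) ^ (k : ℕ)) •
      (ι ℝ (v k) * ι ℝ (χ (fun i => v (k.succAbove i)))) = 0 := by
  simp_rw [← mul_smul_comm, ← map_smul]
  refine sum_ι_mul_ι_eq_zero_of_inner_eq_ite
    (fun k => Submodule.smul_mem _ _ (hχ _ fun i => Submodule.subset_span ⟨_, rfl⟩))
    (φ := ⟪χ (fun i => v (Fin.succAbove 0 i)), v 0⟫) fun k m => ?_
  rw [real_inner_smul_left]
  split_ifs with h
  · rw [h, neg_one_pow_mul_inner_cross_succAbove hperp]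
  · rw [inner_cross_succAbove_of_ne hperp v h, mul_zero]

theorem cross_succAbove_mem_span_of_sum_ι_mul_ι_eq_zero
    (hperp : ∀ (v : Fin r → V) (i : Fin r), ⟪χ v, v i⟫ = 0) {e : Fin (r + 1) → V}
    (he : Orthonormal ℝ e)
    (hsum : ∑ k : Fin (r + 1), ((-1 : ℝ) ^ (k : ℕ)) •
      (ι ℝ (e k) * ι ℝ (χ (fun i => e (k.succAbove i)))) = 0) (k : Fin (r + 1)) :
    χ (fun i => e (k.succAbove i)) ∈ Submodule.span ℝ (Set.range e) := by
  simp_rw [← mul_smul_comm, ← map_smul] at hsum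
  have hk := eq_inner_smul_of_sum_ι_mul_ι_eq_zero he (fun k m hmk => by
    rw [real_inner_smul_left, inner_cross_succAbove_of_ne hperp e hmk, mul_zero]) hsum k
  rw [← Submodule.smul_mem_iff _ (by simp : (-1 : ℝ) ^ (k : ℕ) ≠ 0), hk]
  exact Submodule.smul_mem _ _ (Submodule.subset_span ⟨k, rfl⟩)

end CrossProduct

theorem instanton_iff_tau_vanishes_general
    {V : Type*} [NormedAddCommGroup V] [InnerProductSpace ℝ V] (r : ℕ)
    (χ : AlternatingMap ℝ V V (Fin r))
    (hperp : ∀ (v : Fin r → V) (i : Fin r), ⟪χ v, v i⟫ = 0)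
    (P : Submodule ℝ V) (hdim : Module.finrank ℝ P = r + 1) :
    (∀ p : Fin r → V, (∀ i, p i ∈ P) → χ p ∈ P) ↔
      (∀ v : Fin (r+1) → V, LinearIndependent ℝ v →
        Submodule.span ℝ (Set.range v) = P →
        (Real.sqrt (r+1))⁻¹ •
          ∑ k : Fin (r+1), ((-1 : ℝ) ^ (k : ℕ)) •
            (ExteriorAlgebra.ι ℝ (v k) *
              ExteriorAlgebra.ι ℝ (χ (fun i => v (k.succAbove i)))) = 0) := by
  constructor
  · rintro hχ v - rfl
    rw [sum_ι_mul_ι_cross_succAbove_eq_zero hperp v hχ, smul_zero]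
  · intro hτ p hp
    have : FiniteDimensional ℝ P := .of_finrank_pos (by omega)
    obtain ⟨e, he, rfl⟩ := P.exists_orthonormal_span_eq hdim
    have hsum := (smul_eq_zero.mp (hτ e he.linearIndependent rfl)).resolve_left (by positivity)
    exact χ.map_mem_of_forall_succAbove_mem
      (cross_succAbove_mem_span_of_sum_ι_mul_ι_eq_zero hperp he hsum) hp

/-- Let `χ` be an `r`-fold vector cross product on `V`. An `(r+1)`-dimensional subspace
`P ⊆ V` is preserved by `χ` iff `τ(v₁,...,v_{r+1}) = 0` for every basis `v₁,...,v_{r+1}`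
of `P`, where `τ(v₁,...,v_{r+1}) = (1/√(r+1)) Σ_k (-1)^{k-1} v_k ∧ χ(v₁,...,v̂_k,...,v_{r+1})`
is viewed in the exterior algebra `Λ²V ⊆ ΛV`. -/
theorem instanton_iff_tau_vanishes
    {V : Type*} [NormedAddCommGroup V] [InnerProductSpace ℝ V] (r : ℕ)
    (χ : AlternatingMap ℝ V V (Fin r))
    (hperp : ∀ (v : Fin r → V) (i : Fin r), ⟪χ v, v i⟫ = 0)
    (hnorm : ∀ v : Fin r → V,
      ⟪χ v, χ v⟫ = Matrix.det (Matrix.of fun i j => ⟪v i, v j⟫))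
    (P : Submodule ℝ V) (hdim : Module.finrank ℝ P = r + 1) :
    (∀ p : Fin r → V, (∀ i, p i ∈ P) → χ p ∈ P) ↔
      (∀ v : Fin (r+1) → V, LinearIndependent ℝ v →
        Submodule.span ℝ (Set.range v) = P →
        (Real.sqrt (r+1))⁻¹ •
          ∑ k : Fin (r+1), ((-1 : ℝ) ^ (k : ℕ)) •
            (ExteriorAlgebra.ι ℝ (v k) *
              ExteriorAlgebra.ι ℝ (χ (fun i => v (k.succAbove i)))) = 0) :=
  instanton_iff_tau_vanishes_general r χ hperp P hdim
end

section
/- Let χ be an r-fold vector cross product on a real inner product space V, let g ⊂ so(V) be the Lie subalgebra of skew-symmetric endomorphisms ζ satisfying Σᵢ φ(v₁,...,ζ(vᵢ),...,v_{r+1}) = 0 for all vᵢ, identified with a subspace of Λ²V* via the metric. Then τ(v₁,...,v_{r+1}) is orthogonal to g for all vᵢ ∈ V, i.e., the image of τ lies in g^⊥ ⊂ Λ²V. -/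
/-!
Because `χ v ⟂ vᵢ`, the form `φ(v₁,…,v_{r+1}) = ⟪χ(v₁,…,v_r), v_{r+1}⟫` is alternating. Moving the
`k`-th slot of `φ` to the end therefore gives
`⟪ζ vₖ, χ(v₁,…,v̂ₖ,…,v_{r+1})⟫ = (-1)^(k+r) φ(v₁,…,ζ vₖ,…,v_{r+1})`,
so up to the global factor `±1/√(r+1)` the pairing of `τ(v)` with `ζ̄` is
`Σₖ φ(v₁,…,ζ vₖ,…,v_{r+1})`, which vanishes because `ζ` preserves `φ` infinitesimally.
-/

open scoped RealInnerProductSpace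

/-- The associated form of an `r`-fold vector cross product. -/
noncomputable def vcpForm {V : Type*} [NormedAddCommGroup V] [InnerProductSpace ℝ V]
    {r : ℕ} (χ : AlternatingMap ℝ V V (Fin r)) (v : Fin (r+1) → V) : ℝ :=
  ⟪χ (fun i => v i.castSucc), v (Fin.last r)⟫

section VectorCrossProduct

variable {V : Type*} [NormedAddCommGroup V] [InnerProductSpace ℝ V] {r : ℕ}
  (χ : AlternatingMap ℝ V V (Fin r))

lemma vcpForm_snoc (w : Fin r → V) (u : V) : vcpForm χ (Fin.snoc w u) = ⟪χ w, u⟫ := by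
  simp only [vcpForm, Fin.snoc_castSucc, Fin.snoc_last]

noncomputable def vcpAlternatingForm (hperp : ∀ (v : Fin r → V) (i : Fin r), ⟪χ v, v i⟫ = 0) :
    V [⋀^Fin (r + 1)]→ₗ[ℝ] ℝ where
  toMultilinearMap :=
    MultilinearMap.uncurryRight ((innerₗ V).compMultilinearMap χ.toMultilinearMap)
  map_eq_zero_of_eq' v i j hv hij := by
    change vcpForm χ v = 0
    rw [← Fin.snoc_init_self v, vcpForm_snoc]
    have perp_of_eq_last : ∀ k : Fin r, v k.castSucc = v (Fin.last r) →
        ⟪χ (Fin.init v), v (Fin.last r)⟫ = 0 := fun k hk => hk ▸ hperp (Fin.init v) k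
    induction i using Fin.lastCases with
    | last =>
      induction j using Fin.lastCases with
      | last => exact absurd rfl hij
      | cast j => exact perp_of_eq_last j hv.symm
    | cast i =>
      induction j using Fin.lastCases with
      | last => exact perp_of_eq_last i hv
      | cast j =>
        rw [χ.map_eq_zero_of_eq (Fin.init v) hv (fun h => hij (congrArg Fin.castSucc h)),
          inner_zero_left]

lemma vcpAlternatingForm_apply (hperp : ∀ (v : Fin r → V) (i : Fin r), ⟪χ v, v i⟫ = 0)
    (v : Fin (r + 1) → V) :
    vcpAlternatingForm χ hperp v = vcpForm χ v := rfl

lemma vcpAlternatingForm_vecCons (hperp : ∀ (v : Fin r → V) (i : Fin r), ⟪χ v, v i⟫ = 0)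
    (w : Fin r → V) (u : V) :
    vcpAlternatingForm χ hperp (Matrix.vecCons u w) = (-1) ^ r * ⟪χ w, u⟫ := by
  rw [← (vcpAlternatingForm χ hperp).neg_one_pow_smul_map_insertNth (Fin.last r),
    Fin.insertNth_last', vcpAlternatingForm_apply, vcpForm_snoc, Fin.val_last, zsmul_eq_mul]
  push_cast
  rfl

lemma vcpForm_update (hperp : ∀ (v : Fin r → V) (i : Fin r), ⟪χ v, v i⟫ = 0)
    (v : Fin (r + 1) → V) (k : Fin (r + 1)) (u : V) :
    vcpForm χ (Function.update v k u) = (-1) ^ ((k : ℕ) + r) * ⟪χ (k.removeNth v), u⟫ := by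
  rw [← vcpAlternatingForm_apply χ hperp, ← Fin.insertNth_removeNth,
    AlternatingMap.map_insertNth, vcpAlternatingForm_vecCons, zsmul_eq_mul]
  push_cast
  ring

end VectorCrossProduct

theorem tau_orthogonal_to_vcp_infinitesimal_symmetries_general
    {V : Type*} [NormedAddCommGroup V] [InnerProductSpace ℝ V] (r : ℕ)
    (χ : AlternatingMap ℝ V V (Fin r))
    (hperp : ∀ (v : Fin r → V) (i : Fin r), ⟪χ v, v i⟫ = 0)
    (ζ : V →ₗ[ℝ] V)
    (hg : ∀ v : Fin (r+1) → V,
      ∑ i : Fin (r+1), vcpForm χ (Function.update v i (ζ (v i))) = 0) :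
    ∀ v : Fin (r+1) → V,
      (Real.sqrt (r+1))⁻¹ *
        ∑ k : Fin (r+1), (-1 : ℝ) ^ (k : ℕ) *
          ⟪ζ (v k), χ (fun i => v (k.succAbove i))⟫ = 0 := by
  intro v
  have term_eq : ∀ k : Fin (r + 1),
      (-1 : ℝ) ^ (k : ℕ) * ⟪ζ (v k), χ (fun i => v (k.succAbove i))⟫
        = (-1) ^ r * vcpForm χ (Function.update v k (ζ (v k))) := by
    intro k
    have sign_eq : (-1 : ℝ) ^ (r + ((k : ℕ) + r)) = (-1) ^ (k : ℕ) := by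
      rw [add_left_comm, pow_add, ← two_mul, pow_mul, neg_one_sq, one_pow, mul_one]
    rw [vcpForm_update χ hperp, real_inner_comm, ← mul_assoc, ← pow_add, sign_eq]
    rfl
  rw [Finset.sum_congr rfl fun k _ => term_eq k, ← Finset.mul_sum, hg v, mul_zero, mul_zero]

/-- Let `χ` be an `r`-fold VCP on `V`, and let `ζ ∈ g ⊂ so(V)` be a skew-symmetric
endomorphism which infinitesimally preserves the VCP, i.e.
`Σᵢ φ(v₁,...,ζ(vᵢ),...,v_{r+1}) = 0` for all `vᵢ`.  Identifying `ζ` with the 2-form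
`ζ̄(u∧w) = ⟪ζ u, w⟫`, the pairing of `τ(v₁,...,v_{r+1})` with `ζ̄` vanishes, i.e. the
image of `τ` lies in `g^⊥ ⊂ Λ²V`. -/
theorem tau_orthogonal_to_vcp_infinitesimal_symmetries
    {V : Type*} [NormedAddCommGroup V] [InnerProductSpace ℝ V] (r : ℕ)
    (χ : AlternatingMap ℝ V V (Fin r))
    (hperp : ∀ (v : Fin r → V) (i : Fin r), ⟪χ v, v i⟫ = 0)
    (hnorm : ∀ v : Fin r → V,
      ⟪χ v, χ v⟫ = Matrix.det (Matrix.of fun i j => ⟪v i, v j⟫))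
    (ζ : V →ₗ[ℝ] V)
    (hskew : ∀ u w : V, ⟪ζ u, w⟫ + ⟪u, ζ w⟫ = 0)
    (hg : ∀ v : Fin (r+1) → V,
      ∑ i : Fin (r+1), vcpForm χ (Function.update v i (ζ (v i))) = 0) :
    ∀ v : Fin (r+1) → V,
      (Real.sqrt (r+1))⁻¹ *
        ∑ k : Fin (r+1), (-1 : ℝ) ^ (k : ℕ) *
          ⟪ζ (v k), χ (fun i => v (k.succAbove i))⟫ = 0 :=
  tau_orthogonal_to_vcp_infinitesimal_symmetries_general r χ hperp ζ hg
end

section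
/- Let χ be an r-fold vector cross product on a real inner product space V and let P ⊆ V be an (r+1)-dimensional subspace preserved by χ, with orthogonal decomposition V = P ⊕ N. Then for any p₁,...,p_{r-1} ∈ P and n ∈ N, the vector χ(p₁,...,p_{r-1},n) lies in N. Consequently τ(p₁,...,p_r,n) ∈ P ⊗ N ⊆ Λ²V. -/
open scoped RealInnerProductSpace

/-- Let `χ` be an `r`-fold vector cross product on `V` and `P ⊆ V` an `(r+1)`-dimensional
subspace preserved by `χ`, with orthogonal complement `N = Pᗮ`.  Then for
`p₁,...,p_{r-1} ∈ P` and `n ∈ N`, the vector `χ(p₁,...,p_{r-1},n)` lies in `N`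
(stated for an arbitrary slot of the alternating map `χ`), and consequently
`τ(p₁,...,p_r,n)` lies in `P ⊗ N`, i.e. in the span of `{p ∧ n : p ∈ P, n ∈ N} ⊆ Λ²V`. -/
theorem tau_of_deformation_in_P_tensor_N
    {V : Type*} [NormedAddCommGroup V] [InnerProductSpace ℝ V] (r : ℕ)
    (χ : AlternatingMap ℝ V V (Fin r))
    (hperp : ∀ (v : Fin r → V) (i : Fin r), ⟪χ v, v i⟫ = 0)
    (hnorm : ∀ v : Fin r → V,
      ⟪χ v, χ v⟫ = Matrix.det (Matrix.of fun i j => ⟪v i, v j⟫))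
    (P : Submodule ℝ V) (hdim : Module.finrank ℝ P = r + 1)
    (hpres : ∀ p : Fin r → V, (∀ i, p i ∈ P) → χ p ∈ P) :
    (∀ (q : Fin r → V) (j : Fin r),
      (∀ i, i ≠ j → q i ∈ P) → q j ∈ Pᗮ → χ q ∈ Pᗮ) ∧
    (∀ (v : Fin (r+1) → V) (j : Fin (r+1)),
      (∀ i, i ≠ j → v i ∈ P) → v j ∈ Pᗮ →
      (Real.sqrt (r+1))⁻¹ •
        ∑ k : Fin (r+1), ((-1 : ℝ) ^ (k : ℕ)) •
          (ExteriorAlgebra.ι ℝ (v k) *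
            ExteriorAlgebra.ι ℝ (χ (fun i => v (k.succAbove i)))) ∈
        Submodule.span ℝ {x : ExteriorAlgebra ℝ V |
          ∃ p ∈ P, ∃ n ∈ Pᗮ, x = ExteriorAlgebra.ι ℝ p * ExteriorAlgebra.ι ℝ n}) := by
  have key : ∀ (q : Fin r → V) (j : Fin r),
      (∀ i, i ≠ j → q i ∈ P) → q j ∈ Pᗮ → χ q ∈ Pᗮ := by
    intro q j hq hn
    rw [Submodule.mem_orthogonal]
    intro p hp
    have hqp : χ (Function.update q j p) ∈ P := by
      apply hpres
      intro i
      rcases eq_or_ne i j with rfl | h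
      · simpa using hp
      · rw [Function.update_of_ne h]; exact hq i h
    have h0 : ⟪χ (Function.update q j (q j + p)), q j + p⟫ = 0 := by
      have := hperp (Function.update q j (q j + p)) j
      simpa using this
    have hχa : ⟪χ (Function.update q j (q j)), q j⟫ = 0 := by
      have := hperp (Function.update q j (q j)) j
      simpa using this
    have hχb : ⟪χ (Function.update q j p), p⟫ = 0 := by
      have := hperp (Function.update q j p) j
      simpa using this
    have hbn : ⟪χ (Function.update q j p), q j⟫ = 0 :=
      (Submodule.mem_orthogonal _ _).1 hn _ hqp
    rw [χ.map_update_add, inner_add_left, inner_add_right, inner_add_right] at h0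
    rw [hχa, hχb, hbn] at h0
    rw [real_inner_comm]
    have : χ (Function.update q j (q j)) = χ q := by rw [Function.update_eq_self]
    rw [this] at h0
    linarith
  refine ⟨key, ?_⟩
  intro v j hv hn
  apply Submodule.smul_mem
  apply Submodule.sum_mem
  intro k _
  apply Submodule.smul_mem
  rcases eq_or_ne k j with rfl | hkj
  · -- v k ∈ Pᗮ, χ of the rest ∈ P
    have hχP : χ (fun i => v (k.succAbove i)) ∈ P := by
      apply hpres
      intro i
      exact hv _ (Fin.succAbove_ne k i)
    have hsw : ExteriorAlgebra.ι ℝ (v k) * ExteriorAlgebra.ι ℝ (χ fun i => v (k.succAbove i))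
        = (-1 : ℝ) • (ExteriorAlgebra.ι ℝ (χ fun i => v (k.succAbove i)) *
            ExteriorAlgebra.ι ℝ (v k)) := by
      rw [neg_one_smul, eq_neg_iff_add_eq_zero]
      exact ExteriorAlgebra.ι_add_mul_swap _ _
    rw [hsw]
    apply Submodule.smul_mem
    apply Submodule.subset_span
    exact ⟨_, hχP, _, hn, rfl⟩
  · -- v k ∈ P, χ of the rest ∈ Pᗮ
    obtain ⟨i₀, hi₀⟩ := Fin.exists_succAbove_eq (Ne.symm hkj : j ≠ k)
    have hχN : χ (fun i => v (k.succAbove i)) ∈ Pᗮ := by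
      apply key _ i₀
      · intro i hi
        apply hv
        intro hcon
        exact hi (k.succAbove_right_injective (hcon.trans hi₀.symm))
      · simpa [hi₀] using hn
    apply Submodule.subset_span
    exact ⟨_, hv k hkj, _, hχN, rfl⟩
end

section
/- Let φ be the 4-form associated to a 3-fold vector cross product χ on an 8-dimensional real inner product space V (the Cayley form). There is no 5-dimensional subspace C ⊆ V on which φ vanishes identically. -/
open scoped RealInnerProductSpace

/-!
For orthonormal `a, b`, polarizing the Gram identity `‖χ(a, b, x)‖² = ‖x‖²` on `{a, b}ᗮ` shows
that `x ↦ χ(a, b, x)` is an isometry there. Hence, for orthonormal `e₀, …, e₃`, the four products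
`χ(eᵢ, eⱼ, eₖ)` are orthonormal: any two of them share two factors. If `φ` vanishes on `C ∋ eᵢ`,
these four vectors lie in `Cᗮ`, which has dimension `8 - 5 = 3`.
-/

open Submodule

theorem Submodule.exists_orthonormal_fin_of_le_finrank {V : Type*} [NormedAddCommGroup V]
    [InnerProductSpace ℝ V] (K : Submodule ℝ V) [FiniteDimensional ℝ K] {n : ℕ}
    (hn : n ≤ Module.finrank ℝ K) : ∃ e : Fin n → V, Orthonormal ℝ e ∧ ∀ i, e i ∈ K :=
  ⟨fun i => stdOrthonormalBasis ℝ K (Fin.castLE hn i),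
    ((stdOrthonormalBasis ℝ K).orthonormal.comp _ (Fin.castLE_injective hn)).comp_linearIsometry
      K.subtypeₗᵢ,
    fun i => (stdOrthonormalBasis ℝ K (Fin.castLE hn i)).2⟩

theorem Orthonormal.card_le_finrank_of_forall_mem {V ι : Type*} [NormedAddCommGroup V]
    [InnerProductSpace ℝ V] [Fintype ι] {u : ι → V} (hu : Orthonormal ℝ u)
    {K : Submodule ℝ V} [FiniteDimensional ℝ K] (huK : ∀ i, u i ∈ K) :
    Fintype.card ι ≤ Module.finrank ℝ K :=
  (LinearIndependent.of_comp (v := fun i => (⟨u i, huK i⟩ : K)) K.subtype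
    hu.linearIndependent).fintype_card_le_finrank

theorem Orthonormal.mem_orthogonal_singleton_inf {V ι : Type*} [NormedAddCommGroup V]
    [InnerProductSpace ℝ V] {e : ι → V}
    (he : Orthonormal ℝ e) {i j k : ι} (hik : i ≠ k) (hjk : j ≠ k) :
    e k ∈ (ℝ ∙ e i)ᗮ ⊓ (ℝ ∙ e j)ᗮ :=
  ⟨mem_orthogonal_singleton_iff_inner_right.2 (he.2 hik),
    mem_orthogonal_singleton_iff_inner_right.2 (he.2 hjk)⟩

namespace AlternatingMap

variable {V : Type*} [NormedAddCommGroup V] [InnerProductSpace ℝ V]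
  (χ : AlternatingMap ℝ V V (Fin 3))

theorem map_vecCons_swap_last (a b c : V) : χ ![a, b, c] = -χ ![a, c, b] := by
  have h := χ.map_swap ![a, c, b] (show (1 : Fin 3) ≠ 2 by decide)
  rwa [show ![a, c, b] ∘ Equiv.swap (1 : Fin 3) 2 = ![a, b, c] by
    funext i; fin_cases i <;> rfl] at h

theorem map_vecCons_cycle (a b c : V) : χ ![a, b, c] = χ ![b, c, a] := by
  have h := χ.map_perm ![a, b, c] (finRotate 3)
  rw [show ![a, b, c] ∘ finRotate 3 = ![b, c, a] by funext i; fin_cases i <;> rfl,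
    sign_finRotate] at h
  simpa using h.symm

theorem map_vecCons_add_last (a b x y : V) :
    χ ![a, b, x + y] = χ ![a, b, x] + χ ![a, b, y] := by
  have hupd : ∀ z : V, Function.update ![a, b, x] 2 z = ![a, b, z] := fun z => by
    funext i; fin_cases i <;> rfl
  simpa only [hupd] using χ.map_update_add ![a, b, x] 2 x y

variable {χ}
variable (hnorm : ∀ v : Fin 3 → V, ⟪χ v, χ v⟫ = Matrix.det (Matrix.of fun i j => ⟪v i, v j⟫))
include hnorm

theorem inner_self_map_vecCons_eq {a b z : V} (ha : ‖a‖ = 1) (hb : ‖b‖ = 1) (hab : ⟪a, b⟫ = 0)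
    (hz : z ∈ (ℝ ∙ a)ᗮ ⊓ (ℝ ∙ b)ᗮ) : ⟪χ ![a, b, z], χ ![a, b, z]⟫ = ⟪z, z⟫ := by
  have haz := mem_orthogonal_singleton_iff_inner_right.1 hz.1
  have hbz := mem_orthogonal_singleton_iff_inner_right.1 hz.2
  rw [hnorm, Matrix.det_fin_three]
  simp [ha, hb, hab, haz, hbz, real_inner_comm a, real_inner_comm b]

theorem inner_map_vecCons_eq_inner {a b x y : V} (ha : ‖a‖ = 1) (hb : ‖b‖ = 1)
    (hab : ⟪a, b⟫ = 0) (hx : x ∈ (ℝ ∙ a)ᗮ ⊓ (ℝ ∙ b)ᗮ) (hy : y ∈ (ℝ ∙ a)ᗮ ⊓ (ℝ ∙ b)ᗮ) :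
    ⟪χ ![a, b, x], χ ![a, b, y]⟫ = ⟪x, y⟫ := by
  have hxy := inner_self_map_vecCons_eq hnorm ha hb hab (add_mem hx hy)
  rw [map_vecCons_add_last, real_inner_add_add_self, real_inner_add_add_self,
    inner_self_map_vecCons_eq hnorm ha hb hab hx,
    inner_self_map_vecCons_eq hnorm ha hb hab hy] at hxy
  linarith

section Family

variable {ι : Type*} {e : ι → V} (he : Orthonormal ℝ e)
include he

theorem norm_map_vecCons_of_orthonormal {i j k : ι} (h : Function.Injective ![i, j, k]) :
    ‖χ ![e i, e j, e k]‖ = 1 := by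
  have hij : i ≠ j := h.ne (show (0 : Fin 3) ≠ 1 by decide)
  have hik : i ≠ k := h.ne (show (0 : Fin 3) ≠ 2 by decide)
  have hjk : j ≠ k := h.ne (show (1 : Fin 3) ≠ 2 by decide)
  have hk := he.mem_orthogonal_singleton_inf hik hjk
  have := inner_map_vecCons_eq_inner hnorm (he.1 i) (he.1 j) (he.2 hij) hk hk
  rw [real_inner_self_eq_norm_sq, real_inner_self_eq_norm_sq, he.1 k, one_pow] at this
  exact (pow_eq_one_iff_of_nonneg (norm_nonneg _) two_ne_zero).1 this

theorem inner_map_vecCons_eq_zero_of_orthonormal {i j k l : ι}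
    (h : Function.Injective ![i, j, k, l]) :
    ⟪χ ![e i, e j, e k], χ ![e i, e j, e l]⟫ = 0 := by
  have hij : i ≠ j := h.ne (show (0 : Fin 4) ≠ 1 by decide)
  have hik : i ≠ k := h.ne (show (0 : Fin 4) ≠ 2 by decide)
  have hil : i ≠ l := h.ne (show (0 : Fin 4) ≠ 3 by decide)
  have hjk : j ≠ k := h.ne (show (1 : Fin 4) ≠ 2 by decide)
  have hjl : j ≠ l := h.ne (show (1 : Fin 4) ≠ 3 by decide)
  have hkl : k ≠ l := h.ne (show (2 : Fin 4) ≠ 3 by decide)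
  rw [inner_map_vecCons_eq_inner hnorm (he.1 i) (he.1 j) (he.2 hij)
    (he.mem_orthogonal_singleton_inf hik hjk) (he.mem_orthogonal_singleton_inf hil hjl)]
  exact he.2 hkl

end Family

theorem orthonormal_map_vecCons_of_orthonormal {e : Fin 4 → V} (he : Orthonormal ℝ e) :
    Orthonormal ℝ ![χ ![e 0, e 1, e 2], χ ![e 0, e 1, e 3], χ ![e 0, e 2, e 3],
      χ ![e 1, e 2, e 3]] := by
  -- any two of the triples share two vectors, which a permutation moves to the front
  have hperp {i j k l : Fin 4} (h : Function.Injective ![i, j, k, l]) :=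
    inner_map_vecCons_eq_zero_of_orthonormal hnorm he h
  have h01 : ⟪χ ![e 0, e 1, e 2], χ ![e 0, e 1, e 3]⟫ = 0 := hperp (by decide)
  have h02 : ⟪χ ![e 0, e 1, e 2], χ ![e 0, e 2, e 3]⟫ = 0 := by
    rw [map_vecCons_swap_last, inner_neg_left, neg_eq_zero]
    exact hperp (l := 3) (by decide)
  have h03 : ⟪χ ![e 0, e 1, e 2], χ ![e 1, e 2, e 3]⟫ = 0 := by
    rw [map_vecCons_cycle]
    exact hperp (l := 3) (by decide)
  have h12 : ⟪χ ![e 0, e 1, e 3], χ ![e 0, e 2, e 3]⟫ = 0 := by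
    rw [map_vecCons_swap_last, map_vecCons_swap_last χ (e 0) (e 2), inner_neg_neg]
    exact hperp (l := 2) (by decide)
  have h13 : ⟪χ ![e 0, e 1, e 3], χ ![e 1, e 2, e 3]⟫ = 0 := by
    rw [map_vecCons_cycle, map_vecCons_swap_last χ (e 1) (e 2), inner_neg_right, neg_eq_zero]
    exact hperp (l := 2) (by decide)
  have h23 : ⟪χ ![e 0, e 2, e 3], χ ![e 1, e 2, e 3]⟫ = 0 := by
    rw [map_vecCons_cycle, map_vecCons_cycle χ (e 1)]
    exact hperp (l := 1) (by decide)
  have hunit {i j k : Fin 4} (h : Function.Injective ![i, j, k]) :=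
    norm_map_vecCons_of_orthonormal hnorm he h
  refine ⟨fun i => by fin_cases i <;> exact hunit (by decide), fun i j hij => ?_⟩
  fin_cases i <;> fin_cases j <;> first
    | exact absurd rfl hij
    | simp [h01, h02, h03, h12, h13, h23, real_inner_comm (χ ![e 0, e 1, e 2]),
        real_inner_comm (χ ![e 0, e 1, e 3]), real_inner_comm (χ ![e 0, e 2, e 3])]

end AlternatingMap

theorem no_brane_in_spin7_general
    {V : Type*} [NormedAddCommGroup V] [InnerProductSpace ℝ V]
    [FiniteDimensional ℝ V] (hV : Module.finrank ℝ V = 8)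
    (χ : AlternatingMap ℝ V V (Fin 3))
    (hnorm : ∀ v : Fin 3 → V,
      ⟪χ v, χ v⟫ = Matrix.det (Matrix.of fun i j => ⟪v i, v j⟫)) :
    ¬ ∃ C : Submodule ℝ V, Module.finrank ℝ C = 5 ∧
      ∀ a b c d : V, a ∈ C → b ∈ C → c ∈ C → d ∈ C → ⟪χ ![a, b, c], d⟫ = 0 := by
  rintro ⟨C, hC, hφ⟩
  obtain ⟨e, he, heC⟩ := C.exists_orthonormal_fin_of_le_finrank (n := 4) (by omega)
  have hχC {a b c : V} (ha : a ∈ C) (hb : b ∈ C) (hc : c ∈ C) : χ ![a, b, c] ∈ Cᗮ :=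
    (mem_orthogonal' C _).2 fun d hd => hφ a b c d ha hb hc hd
  have h4 := Orthonormal.card_le_finrank_of_forall_mem
    (AlternatingMap.orthonormal_map_vecCons_of_orthonormal hnorm he) (K := Cᗮ) fun i => by
      fin_cases i <;> exact hχC (heC _) (heC _) (heC _)
  have hdim := C.finrank_add_finrank_orthogonal
  rw [Fintype.card_fin] at h4
  omega

/-- Let `φ` be the Cayley 4-form of a 3-fold vector cross product `χ` on an 8-dimensional
real inner product space `V`.  There is no 5-dimensional subspace `C ⊆ V` on which `φ`
vanishes identically; i.e. branes do not exist in `Spin(7)`-geometry. -/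
theorem no_brane_in_spin7
    {V : Type*} [NormedAddCommGroup V] [InnerProductSpace ℝ V]
    [FiniteDimensional ℝ V] (hV : Module.finrank ℝ V = 8)
    (χ : AlternatingMap ℝ V V (Fin 3))
    (hperp : ∀ (v : Fin 3 → V) (i : Fin 3), ⟪χ v, v i⟫ = 0)
    (hnorm : ∀ v : Fin 3 → V,
      ⟪χ v, χ v⟫ = Matrix.det (Matrix.of fun i j => ⟪v i, v j⟫)) :
    ¬ ∃ C : Submodule ℝ V, Module.finrank ℝ C = 5 ∧
      ∀ a b c d : V, a ∈ C → b ∈ C → c ∈ C → d ∈ C → ⟪χ ![a, b, c], d⟫ = 0 :=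
  no_brane_in_spin7_general hV χ hnorm
end

section
/- Let V be a Hermitian complex vector space of complex dimension n ≥ 4 (as a complex inner product space). Then V admits no 2-fold complex vector cross product: there is no (3,0)-form φ on V with |ι_{e₁∧e₂}φ| = 2^{3/2} for all orthonormal e₁, e₂ ∈ V^{1,0}. -/
/-!
Choose a unitary basis `a₁, …, aₙ`, i.e. `a₁, J a₁, …, aₙ, J aₙ` is a real orthonormal basis.
For a form `φ` of type `(3,0)` put `ψ(x, y) = (φ(x, y, aₘ))ₘ ∈ ℂⁿ`; it is skew and complex
linear in each argument, and since `φ(x, y, J w) = i φ(x, y, w)` the normalisation of `φ` reads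
`‖ψ(x, y)‖ = ‖x‖ ‖y‖` whenever `x` is orthogonal to `y` and `J y`. Polarising this identity,
first in `y` (with `y + z` and `y + J z`) and then in `x`, shows that the `n(n-1)/2` vectors
`ψ(aⱼ, aₖ)`, `j < k`, are orthonormal in `ℂⁿ`. Hence `n(n-1)/2 ≤ n`, i.e. `n ≤ 3`.
-/

open scoped RealInnerProductSpace

section

variable {V : Type*} [NormedAddCommGroup V] [InnerProductSpace ℝ V] {J : V →ₗ[ℝ] V}

/-- `x` is orthogonal to the complex line `span {y, J y}`. -/
def JOrthogonal (J : V →ₗ[ℝ] V) (x y : V) : Prop := ⟪x, y⟫ = 0 ∧ ⟪x, J y⟫ = 0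

theorem JOrthogonal.add_left {x y z : V} (hx : JOrthogonal J x z) (hy : JOrthogonal J y z) :
    JOrthogonal J (x + y) z :=
  ⟨by rw [inner_add_left, hx.1, hy.1, add_zero], by rw [inner_add_left, hx.2, hy.2, add_zero]⟩

theorem JOrthogonal.add_right {x y z : V} (hy : JOrthogonal J x y) (hz : JOrthogonal J x z) :
    JOrthogonal J x (y + z) :=
  ⟨by rw [inner_add_right, hy.1, hz.1, add_zero],
    by rw [map_add, inner_add_right, hy.2, hz.2, add_zero]⟩

theorem JOrthogonal.smul_left {x y : V} (h : JOrthogonal J x y) (r : ℝ) :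
    JOrthogonal J (r • x) y :=
  ⟨by rw [inner_smul_left, h.1, mul_zero], by rw [inner_smul_left, h.2, mul_zero]⟩

theorem JOrthogonal.smul_right {x y : V} (h : JOrthogonal J x y) (r : ℝ) :
    JOrthogonal J x (r • y) :=
  ⟨by rw [inner_smul_right, h.1, mul_zero], by rw [map_smul, inner_smul_right, h.2, mul_zero]⟩

section ComplexStructure

variable (hJ2 : ∀ v, J (J v) = -v) (hJg : ∀ u v, ⟪J u, J v⟫ = ⟪u, v⟫)
include hJ2 hJg

theorem inner_J_right (u v : V) : ⟪u, J v⟫ = -⟪J u, v⟫ := by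
  rw [← hJg, hJ2, inner_neg_right]

theorem inner_J_self (v : V) : ⟪v, J v⟫ = 0 := by
  have := inner_J_right hJ2 hJg v v
  rw [real_inner_comm v (J v)] at this
  linarith

omit hJ2 in
theorem norm_J (v : V) : ‖J v‖ = ‖v‖ := by
  rw [norm_eq_sqrt_real_inner, hJg, ← norm_eq_sqrt_real_inner]

theorem JOrthogonal.symm {x y : V} (h : JOrthogonal J x y) : JOrthogonal J y x :=
  ⟨by rw [real_inner_comm, h.1],
    by rw [inner_J_right hJ2 hJg, real_inner_comm, h.2, neg_zero]⟩

omit hJg in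
theorem JOrthogonal.J_right {x y : V} (h : JOrthogonal J x y) : JOrthogonal J x (J y) :=
  ⟨h.2, by rw [hJ2, inner_neg_right, h.1, neg_zero]⟩

theorem JOrthogonal.J_left {x y : V} (h : JOrthogonal J x y) : JOrthogonal J (J x) y :=
  ((h.symm hJ2 hJg).J_right hJ2).symm hJ2 hJg

theorem orthonormal_of_JOrthogonal {x y : V} (hx : ‖x‖ = 1) (hy : ‖y‖ = 1)
    (h : JOrthogonal J x y) : Orthonormal ℝ ![x, J x, y, J y] := by
  have h' := h.symm hJ2 hJg
  rw [orthonormal_iff_ite]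
  intro i j
  fin_cases i <;> fin_cases j <;>
    simp [norm_J hJg, hx, hy, hJg, inner_J_self hJ2 hJg, h.1, h.2, h'.1, h'.2, real_inner_comm]

theorem orthonormal_sum_elim_iff {ι : Type*} {a : ι → V} :
    Orthonormal ℝ (Sum.elim a (J ∘ a)) ↔
      (∀ i, ‖a i‖ = 1) ∧ Pairwise fun i j => JOrthogonal J (a i) (a j) := by
  constructor
  · intro h
    exact ⟨fun i => h.1 (.inl i), fun i j hij =>
      ⟨h.2 (Sum.inl_injective.ne hij), h.2 Sum.inl_ne_inr⟩⟩
  · rintro ⟨h1, h2⟩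
    refine ⟨by rintro (i | i) <;> simp [h1, norm_J hJg], ?_⟩
    rintro (i | i) (j | j) hij <;> simp only [Sum.elim_inl, Sum.elim_inr, Function.comp_apply]
    · exact (h2 (Sum.inl_injective.ne_iff.mp hij)).1
    · obtain rfl | hij := eq_or_ne i j
      · exact inner_J_self hJ2 hJg _
      · exact (h2 hij).2
    · obtain rfl | hij := eq_or_ne i j
      · rw [real_inner_comm, inner_J_self hJ2 hJg]
      · exact ((h2 hij).J_left hJ2 hJg).1
    · rw [hJg]
      exact (h2 (Sum.inr_injective.ne_iff.mp hij)).1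

theorem exists_orthonormal_sum_elim [FiniteDimensional ℝ V] (k : ℕ)
    (hk : 2 * k ≤ Module.finrank ℝ V) :
    ∃ a : Fin k → V, Orthonormal ℝ (Sum.elim a (J ∘ a)) := by
  induction k with
  | zero =>
    exact ⟨Fin.elim0, (orthonormal_sum_elim_iff hJ2 hJg).2 ⟨fun i => i.elim0, fun i => i.elim0⟩⟩
  | succ k ih =>
    obtain ⟨a, ha⟩ := ih (by omega)
    obtain ⟨u, hu, hau⟩ : ∃ u : V, ‖u‖ = 1 ∧ ∀ i, JOrthogonal J (a i) u := by
      set W := Submodule.span ℝ (Set.range (Sum.elim a (J ∘ a)))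
      have hW : Wᗮ ≠ ⊥ := by
        rw [Ne, Submodule.orthogonal_eq_bot_iff]
        intro hW
        have : Module.finrank ℝ W ≤ 2 * k :=
          (finrank_range_le_card (Sum.elim a (J ∘ a))).trans (by simp [two_mul])
        rw [hW, finrank_top] at this
        omega
      obtain ⟨v, hv, hv0⟩ := Submodule.exists_mem_ne_zero_of_ne_bot hW
      have hmem (s : Fin k ⊕ Fin k) : ⟪Sum.elim a (J ∘ a) s, v⟫ = 0 :=
        Submodule.inner_right_of_mem_orthogonal (Submodule.subset_span (Set.mem_range_self s)) hv
      refine ⟨‖v‖⁻¹ • v, norm_smul_inv_norm hv0, fun i => ?_⟩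
      have : JOrthogonal J (a i) v :=
        ⟨hmem (.inl i), by rw [inner_J_right hJ2 hJg]; simpa using hmem (.inr i)⟩
      exact this.smul_right _
    refine ⟨Fin.snoc a u, ?_⟩
    rw [orthonormal_sum_elim_iff hJ2 hJg] at ha ⊢
    refine ⟨Fin.lastCases (by simpa using hu) (by simpa using ha.1), ?_⟩
    intro i j hij
    induction i using Fin.lastCases <;> induction j using Fin.lastCases
    · exact absurd rfl hij
    · simpa using (hau _).symm hJ2 hJg
    · simpa using hau _
    · simpa using ha.2 (Fin.castSucc_injective _ |>.ne_iff.mp hij)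

end ComplexStructure

theorem inner_eq_zero_of_norm_add_sq_eq {E : Type*} [NormedAddCommGroup E]
    [InnerProductSpace ℂ E] {u v : E} (h₁ : ‖u + v‖ ^ 2 = ‖u‖ ^ 2 + ‖v‖ ^ 2)
    (h₂ : ‖u + Complex.I • v‖ ^ 2 = ‖u‖ ^ 2 + ‖v‖ ^ 2) : inner ℂ u v = 0 := by
  rw [@norm_add_sq ℂ] at h₁ h₂
  rw [inner_smul_right, norm_smul, Complex.norm_I, one_mul] at h₂
  apply Complex.ext <;> simp at * <;> linarith

section Bilinear

variable {E : Type*} [NormedAddCommGroup E] [InnerProductSpace ℂ E]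
  {B : V →ₗ[ℝ] V →ₗ[ℝ] E}

theorem norm_apply_apply_of_JOrthogonal
    (hB : ∀ x y, ‖x‖ = 1 → ‖y‖ = 1 → JOrthogonal J x y → ‖B x y‖ = 1) {x y : V}
    (h : JOrthogonal J x y) : ‖B x y‖ = ‖x‖ * ‖y‖ := by
  obtain rfl | hx := eq_or_ne x 0
  · simp
  obtain rfl | hy := eq_or_ne y 0
  · simp
  have := hB _ _ (norm_smul_inv_norm hx) (norm_smul_inv_norm hy) ((h.smul_left _).smul_right _)
  have hx' : ‖x‖ ≠ 0 := norm_ne_zero_iff.mpr hx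
  have hy' : ‖y‖ ≠ 0 := norm_ne_zero_iff.mpr hy
  simp only [map_smul, LinearMap.smul_apply, norm_smul, norm_inv, RCLike.ofReal_real_eq_id, id_eq,
    norm_norm] at this
  field_simp at this
  linarith

variable (hJ2 : ∀ v, J (J v) = -v) (hJg : ∀ u v, ⟪J u, J v⟫ = ⟪u, v⟫)
  (hBJ : ∀ x y, B x (J y) = Complex.I • B x y) (hBskew : ∀ x y, B y x = -B x y)
  (hB : ∀ x y, JOrthogonal J x y → ‖B x y‖ = ‖x‖ * ‖y‖)

include hBJ hBskew in
theorem apply_J_left (x y : V) : B (J x) y = Complex.I • B x y := by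
  rw [hBskew, hBJ, hBskew, smul_neg, neg_neg]

include hJ2 hJg hBJ hB in
theorem inner_apply_apply_eq_zero_of_left_eq {x y z : V} (hxy : JOrthogonal J x y)
    (hxz : JOrthogonal J x z) (hyz : JOrthogonal J y z) : inner ℂ (B x y) (B x z) = 0 := by
  apply inner_eq_zero_of_norm_add_sq_eq
  · rw [← map_add, hB _ _ (hxy.add_right hxz), hB _ _ hxy, hB _ _ hxz, mul_pow,
      norm_add_sq_real, hyz.1]
    ring
  · rw [← hBJ, ← map_add, hB _ _ (hxy.add_right (hxz.J_right hJ2)), hB _ _ hxy, hB _ _ hxz,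
      mul_pow, norm_add_sq_real, hyz.2, norm_J hJg]
    ring

include hJ2 hJg hBJ hBskew hB in
theorem inner_apply_apply_eq_zero {x y z w : V} (hxy : JOrthogonal J x y)
    (hxw : JOrthogonal J x w) (hyz : JOrthogonal J y z) (hyw : JOrthogonal J y w)
    (hzw : JOrthogonal J z w) : inner ℂ (B x y) (B z w) = 0 := by
  have hzy := hyz.symm hJ2 hJg
  have h₁ := inner_apply_apply_eq_zero_of_left_eq hJ2 hJg hBJ hB
    (hxy.add_left hzy) (hxw.add_left hzw) hyw
  have h₂ := inner_apply_apply_eq_zero_of_left_eq hJ2 hJg hBJ hB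
    (hxy.add_left (hzy.J_left hJ2 hJg)) (hxw.add_left (hzw.J_left hJ2 hJg)) hyw
  simp only [map_add, LinearMap.add_apply, apply_J_left hBJ hBskew, inner_add_left,
    inner_add_right, inner_smul_left, inner_smul_right, Complex.conj_I,
    inner_apply_apply_eq_zero_of_left_eq hJ2 hJg hBJ hB hxy hxw hyw,
    inner_apply_apply_eq_zero_of_left_eq hJ2 hJg hBJ hB hzy hzw hyw] at h₁ h₂
  linear_combination (1 / 2 : ℂ) * h₁ - (Complex.I / 2) * h₂ +
    (inner ℂ (B x y) (B z w) - inner ℂ (B z y) (B x w)) / 2 * Complex.I_sq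

include hJ2 hJg hBJ hBskew hB in
theorem orthonormal_apply_apply_of_lt {ι : Type*} [LinearOrder ι] {a : ι → V}
    (ha₁ : ∀ i, ‖a i‖ = 1) (ha : Pairwise fun i j => JOrthogonal J (a i) (a j)) :
    Orthonormal ℂ fun p : {p : ι × ι // p.1 < p.2} => B (a p.1.1) (a p.1.2) := by
  have common_left {i j k : ι} (hij : i ≠ j) (hik : i ≠ k) (hjk : j ≠ k) :
      inner ℂ (B (a i) (a j)) (B (a i) (a k)) = 0 :=
    inner_apply_apply_eq_zero_of_left_eq hJ2 hJg hBJ hB (ha hij) (ha hik) (ha hjk)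
  refine ⟨fun p => by rw [hB _ _ (ha p.2.ne), ha₁, ha₁, one_mul], ?_⟩
  rintro ⟨⟨i, j⟩, hij⟩ ⟨⟨k, l⟩, hkl⟩ hne
  simp only [ne_eq, Subtype.mk.injEq, Prod.mk.injEq, not_and] at hne
  dsimp only at hij hkl ⊢
  obtain rfl | hik := eq_or_ne i k
  · exact common_left hij.ne hkl.ne (hne rfl)
  obtain rfl | hjl := eq_or_ne j l
  · rw [hBskew (a j) (a i), hBskew (a j) (a k), inner_neg_left, inner_neg_right, neg_neg]
    exact common_left hij.ne' hkl.ne' hik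
  obtain rfl | hil := eq_or_ne i l
  · rw [hBskew (a i) (a k), inner_neg_right, common_left hij.ne hkl.ne' (hkl.trans hij).ne',
      neg_zero]
  obtain rfl | hjk := eq_or_ne j k
  · rw [hBskew (a j) (a i), inner_neg_left, common_left hij.ne' hkl.ne hil, neg_zero]
  exact inner_apply_apply_eq_zero hJ2 hJg hBJ hBskew hB (ha hij.ne) (ha hil) (ha hjk)
    (ha hjl) (ha hkl.ne)

end Bilinear

section Contraction

variable {ι : Type*} (φ : AlternatingMap ℝ V ℂ (Fin 3)) (a : ι → V)

noncomputable def contraction : V →ₗ[ℝ] V →ₗ[ℝ] EuclideanSpace ℂ ι :=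
  LinearMap.mk₂ ℝ (fun x y => WithLp.toLp 2 fun m => φ ![x, y, a m])
    (fun x x' y => by ext m; exact φ.map_vecCons_add _ x x')
    (fun c x y => by ext m; exact φ.map_vecCons_smul _ c x)
    (fun x y y' => by ext m; exact (φ.curryLeft x).map_vecCons_add ![a m] y y')
    (fun c x y => by ext m; exact (φ.curryLeft x).map_vecCons_smul ![a m] c y)

theorem contraction_apply_apply (x y : V) (m : ι) :
    contraction φ a x y m = φ ![x, y, a m] :=
  rfl

theorem contraction_swap (x y : V) : contraction φ a y x = -contraction φ a x y := by
  ext m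
  change φ ![y, x, a m] = -φ ![x, y, a m]
  simpa using φ.map_swap ![x, y, a m] (zero_ne_one : (0 : Fin 3) ≠ 1)

variable {φ} (hφ : ∀ (v : Fin 3 → V) (j : Fin 3),
  φ (Function.update v j (J (v j))) = Complex.I * φ v)
include hφ

theorem contraction_J_right (x y : V) :
    contraction φ a x (J y) = Complex.I • contraction φ a x y := by
  ext m
  change φ ![x, J y, a m] = Complex.I * φ ![x, y, a m]
  rw [← hφ ![x, y, a m] 1]
  congr 1
  ext i
  fin_cases i <;> rfl

omit a in
theorem map_J_third (x y w : V) : φ ![x, y, J w] = Complex.I * φ ![x, y, w] := by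
  rw [← hφ ![x, y, w] 2]
  congr 1
  ext i
  fin_cases i <;> rfl

theorem sum_norm_sq_sum_elim [Fintype ι] (x y : V) :
    ∑ s, ‖φ ![x, y, Sum.elim a (J ∘ a) s]‖ ^ 2 = 2 * ‖contraction φ a x y‖ ^ 2 := by
  simp [Fintype.sum_sum_type, EuclideanSpace.norm_sq_eq, contraction_apply_apply,
    map_J_third hφ, two_mul]

end Contraction

end

theorem self_lt_choose_two {n : ℕ} (hn : 4 ≤ n) : n < n.choose 2 := by
  rw [Nat.choose_two_right, Nat.lt_div_iff_mul_lt' (Nat.even_mul_pred_self n).two_dvd]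
  have : n * 3 ≤ n * (n - 1) := Nat.mul_le_mul_left n (by omega)
  omega

/-- A Hermitian complex vector space of complex dimension `n ≥ 4` admits no 2-fold
complex vector cross product: there is no form `φ` of type `(3,0)` (inserting `J` in a
slot multiplies the value by `i`) such that `|ι_{e₁∧e₂}φ| = 2^{3/2}` for all orthonormal
holomorphic vectors `e₁, e₂ ∈ V^{1,0}`.  In real terms, with `eₖ = (aₖ - iJaₖ)/√2` for
real vectors `a₁, Ja₁, a₂, Ja₂` orthonormal, the Hermitian norm squared of the
contraction `ι_{e₁∧e₂}φ` equals `4 · Σ_b |φ(a₁,a₂,b)|²` over any real orthonormal basis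
`b`, so the condition reads `Σ_b |φ(a₁,a₂,b)|² = 2`. -/
theorem no_two_fold_complex_vcp_in_high_dimension
    {V : Type*} [NormedAddCommGroup V] [InnerProductSpace ℝ V]
    [FiniteDimensional ℝ V] (n : ℕ) (hn : 4 ≤ n)
    (hdim : Module.finrank ℝ V = 2 * n)
    (J : V →ₗ[ℝ] V) (hJ2 : ∀ v : V, J (J v) = -v)
    (hJg : ∀ u v : V, ⟪J u, J v⟫ = ⟪u, v⟫) :
    ¬ ∃ φ : AlternatingMap ℝ V ℂ (Fin 3),
      (∀ (v : Fin 3 → V) (j : Fin 3),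
        φ (Function.update v j (J (v j))) = Complex.I * φ v) ∧
      (∀ (b : OrthonormalBasis (Fin (2 * n)) ℝ V) (a₁ a₂ : V),
        Orthonormal ℝ ![a₁, J a₁, a₂, J a₂] →
        ∑ i : Fin (2 * n), ‖φ ![a₁, a₂, b i]‖ ^ 2 = 2) := by
  rintro ⟨φ, hφ, hnorm⟩
  obtain ⟨a, ha⟩ := exists_orthonormal_sum_elim hJ2 hJg n hdim.ge
  let e : Fin n ⊕ Fin n ≃ Fin (2 * n) := finSumFinEquiv.trans (finCongr (two_mul n).symm)
  let b := (OrthonormalBasis.mk ha (ha.linearIndependent.span_eq_top_of_card_eq_finrank'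
    (by simp [hdim, two_mul])).ge).reindex e
  have hunit (x y : V) (hx : ‖x‖ = 1) (hy : ‖y‖ = 1) (hxy : JOrthogonal J x y) :
      ‖contraction φ a x y‖ = 1 := by
    have h := hnorm b x y (orthonormal_of_JOrthogonal hJ2 hJg hx hy hxy)
    rw [← e.sum_comp] at h
    simp only [b, OrthonormalBasis.reindex_apply, Equiv.symm_apply_apply,
      OrthonormalBasis.coe_mk, sum_norm_sq_sum_elim a hφ] at h
    nlinarith [norm_nonneg (contraction φ a x y)]
  obtain ⟨ha₁, ha₂⟩ := (orthonormal_sum_elim_iff hJ2 hJg).1 ha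
  have hpairs := orthonormal_apply_apply_of_lt hJ2 hJg (contraction_J_right a hφ)
    (contraction_swap φ a) (fun _ _ => norm_apply_apply_of_JOrthogonal hunit) ha₁ ha₂
  have hcard := hpairs.linearIndependent.fintype_card_le_finrank
  rw [Fintype.card_subtype, Fintype.card_product_filter_lt, Fintype.card_fin,
    finrank_euclideanSpace_fin] at hcard
  exact (self_lt_choose_two hn).not_ge hcard
end
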